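/- arXiv:0712.0822 — 7 statements merged into one kernel-verified Lean document; each statement's English description precedes it below -/
import Mathlib

section
/- (Condensation of determinants) Let A = (a_{i,j}) be an n×n matrix over a field (or commutative ring) with n > 2. Then (a_{1,1})^{n-2} · det A = det B, where B is the (n-1)×(n-1) matrix with entries b_{i,j} = det [[a_{1,1}, a_{1,j+1}], [a_{i+1,1}, a_{i+1,j+1}]] = a_{1,1}·a_{i+1,j+1} − a_{1,j+1}·a_{i+1,1}, for 1 ≤ i,j ≤ n-1. -/
/-!
Multiply rows `2, …, n` of `A` by `a₁₁` and subtract `aᵢ₁` times the first row: this scales the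
determinant by `a₁₁ ^ (n - 1)` and produces a matrix whose first column is `(a₁₁, 0, …, 0)` and
whose lower right block is `B`, so `a₁₁ ^ (n - 1) · det A = a₁₁ · det B`. Cancelling `a₁₁` is
legitimate for the generic matrix of indeterminates over `ℤ`, and the identity then specialises
to every matrix over every commutative ring.
-/

namespace Matrix

variable {R S : Type*} [CommRing R] [CommRing S] {n : ℕ}

def chioCondensation (A : Matrix (Fin (n + 1)) (Fin (n + 1)) R) : Matrix (Fin n) (Fin n) R :=
  of fun i j => A 0 0 * A i.succ j.succ - A 0 j.succ * A i.succ 0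

theorem chioCondensation_map {F : Type*} [FunLike F R S] [RingHomClass F R S]
    (A : Matrix (Fin (n + 1)) (Fin (n + 1)) R) (f : F) :
    chioCondensation (A.map f) = (chioCondensation A).map f := by
  ext i j
  simp [chioCondensation]

theorem det_succ_eq_mul_det_submatrix_of_col_zero (A : Matrix (Fin (n + 1)) (Fin (n + 1)) R)
    (h : ∀ i, i ≠ 0 → A i 0 = 0) :
    A.det = A 0 0 * (A.submatrix Fin.succ Fin.succ).det := by
  rw [det_succ_column_zero, Fin.sum_univ_succ, Finset.sum_eq_zero fun i _ => by
    rw [h i.succ i.succ_ne_zero, mul_zero, zero_mul]]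
  simp

theorem pow_mul_det_eq_mul_det_chioCondensation (A : Matrix (Fin (n + 1)) (Fin (n + 1)) R) :
    A 0 0 ^ n * A.det = A 0 0 * (chioCondensation A).det := by
  let a := A 0 0
  let M : Matrix (Fin (n + 1)) (Fin (n + 1)) R :=
    of fun i j => (Fin.cons 1 fun _ => a : Fin (n + 1) → R) i * A i j
  let N : Matrix (Fin (n + 1)) (Fin (n + 1)) R :=
    of fun i j => M i j + (Fin.cons 0 fun i => -A i.succ 0 : Fin (n + 1) → R) i * M 0 j
  have hM : M.det = a ^ n * A.det := by
    simp [M, det_mul_column, Fin.prod_univ_succ]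
  have hN : N.det = M.det :=
    det_eq_of_forall_row_eq_smul_add_const _ 0 rfl fun _ _ => rfl
  have hN_col : ∀ i, i ≠ 0 → N i 0 = 0 := by
    intro i hi
    obtain ⟨i, rfl⟩ := Fin.exists_succ_eq.mpr hi
    simp only [of_apply, Fin.cons_zero, one_mul, Fin.cons_succ, neg_mul, N, M, a]
    ring
  have hN_sub : N.submatrix Fin.succ Fin.succ = chioCondensation A := by
    ext i j
    simp only [of_apply, Fin.cons_zero, one_mul, submatrix_apply, Fin.cons_succ, neg_mul,
      chioCondensation, N, M, a]
    ring
  rw [← hM, ← hN, det_succ_eq_mul_det_submatrix_of_col_zero N hN_col, hN_sub]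
  simp [N, M, a]

theorem pow_mul_det_eq_det_chioCondensation (A : Matrix (Fin (n + 2)) (Fin (n + 2)) R) :
    A 0 0 ^ n * A.det = (chioCondensation A).det := by
  let X := mvPolynomialX (Fin (n + 2)) (Fin (n + 2)) ℤ
  have hX : X 0 0 ^ n * X.det = (chioCondensation X).det :=
    mul_left_cancel₀ (show X 0 0 ≠ 0 from MvPolynomial.X_ne_zero _) <| by
      rw [← mul_assoc, ← pow_succ', pow_mul_det_eq_mul_det_chioCondensation]
  let f := MvPolynomial.aeval (R := ℤ) fun p : Fin (n + 2) × Fin (n + 2) => A p.1 p.2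
  have hfX : f.mapMatrix X = A := mvPolynomialX_mapMatrix_aeval ℤ A
  calc A 0 0 ^ n * A.det = f (X 0 0 ^ n * X.det) := by
        rw [map_mul, map_pow, AlgHom.map_det, hfX]
        simp [f, X]
    _ = (chioCondensation A).det := by
        rw [hX, AlgHom.map_det, ← hfX, AlgHom.mapMatrix_apply, AlgHom.mapMatrix_apply,
          chioCondensation_map]

end Matrix

/-- Chiò condensation: `(a₁₁)^(n-2) ⬝ det A = det B` where `B` is the matrix of `2×2`
minors anchored at the `(1,1)` entry. -/
theorem chio_condensation
    {R : Type*} [CommRing R] (n : ℕ)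
    (A : Matrix (Fin (n + 3)) (Fin (n + 3)) R) :
    (A 0 0) ^ (n + 1) * A.det =
      Matrix.det fun i j : Fin (n + 2) =>
        A 0 0 * A i.succ j.succ - A 0 j.succ * A i.succ 0 :=
  Matrix.pow_mul_det_eq_det_chioCondensation A
end

section
/- (Desnanot–Jacobi / Dodgson identity, corner form) For an n×n matrix A with n ≥ 2: det A · det A^{1,n}_{1,n} = det A^{1}_{1} · det A^{n}_{n} − det A^{1}_{n} · det A^{n}_{1}, where A^{i}_{j} denotes A with row i and column j removed, and A^{1,n}_{1,n} denotes A with rows 1,n and columns 1,n removed (interpreted as having determinant 1 when n = 2). -/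
/-- An equivalence placing `Fin 2` at the two "corner" positions `0` and `Fin.last`
of `Fin (n + 2)`, and `Fin n` at the middle positions. -/
def cornerEquiv (n : ℕ) : Fin n ⊕ Fin 2 ≃ Fin (n + 2) where
  toFun := Sum.elim (fun i => i.succ.castSucc) ![0, Fin.last (n + 1)]
  invFun j :=
    if h0 : (j : ℕ) = 0 then .inr 0
    else if h : (j : ℕ) = n + 1 then .inr 1
    else .inl ⟨(j : ℕ) - 1, by have := j.isLt; omega⟩
  left_inv := by
    rintro (i | k)
    · have hi := i.isLt
      simp only [Sum.elim_inl, Fin.coe_castSucc, Fin.val_succ]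
      split_ifs <;> simp_all [Fin.ext_iff] <;> omega
    · fin_cases k <;> simp [Fin.last]
  right_inv := by
    intro j
    have := j.isLt
    rcases j with ⟨jv, hj⟩
    by_cases h0 : jv = 0
    · simp [h0, Fin.ext_iff]
    · by_cases hl : jv = n + 1
      · simp [h0, hl, Fin.ext_iff, Fin.last]
      · simp only [h0, hl, dif_neg, not_false_iff]
        simp [Fin.ext_iff]
        omega

@[simp] lemma cornerEquiv_inl {n : ℕ} (i : Fin n) :
    cornerEquiv n (.inl i) = i.succ.castSucc := rfl

@[simp] lemma cornerEquiv_inr0 {n : ℕ} :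
    cornerEquiv n (.inr 0) = 0 := rfl

@[simp] lemma cornerEquiv_inr1 {n : ℕ} :
    cornerEquiv n (.inr 1) = Fin.last (n + 1) := rfl

/-- Key computation, valid over any commutative ring: the Desnanot–Jacobi identity
multiplied through by `det A`, stated in terms of the adjugate. -/
lemma dj_aux {R : Type*} [CommRing R] (n : ℕ)
    (A : Matrix (Fin (n + 2)) (Fin (n + 2)) R) :
    A.det * (A.adjugate 0 0 * A.adjugate (Fin.last (n + 1)) (Fin.last (n + 1)) -
        A.adjugate 0 (Fin.last (n + 1)) * A.adjugate (Fin.last (n + 1)) 0) =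
      A.det * (A.det *
        (A.submatrix (fun i : Fin n => i.succ.castSucc)
          (fun j : Fin n => j.succ.castSucc)).det) := by
  set e := cornerEquiv n with he
  set B := A.adjugate with hB
  set Q : Matrix (Fin n ⊕ Fin 2) (Fin n ⊕ Fin 2) R :=
    Matrix.fromBlocks 1 (Matrix.of fun i k => B (e (.inl i)) (e (.inr k))) 0
      (Matrix.of fun k k' => B (e (.inr k)) (e (.inr k'))) with hQ
  have hAB : ∀ (r : Fin n ⊕ Fin 2) (k : Fin 2),
      (∑ x : Fin n ⊕ Fin 2, A (e r) (e x) * B (e x) (e (.inr k))) =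
        A.det * (if r = .inr k then 1 else 0) := by
    intro r k
    rw [Equiv.sum_comp e (fun y => A (e r) y * B y (e (.inr k)))]
    have h1 : (∑ y, A (e r) y * B y (e (.inr k))) = (A * B) (e r) (e (.inr k)) :=
      (Matrix.mul_apply).symm
    rw [h1, hB, Matrix.mul_adjugate]
    simp [Matrix.one_apply, e.injective.eq_iff]
  have hmul : A.submatrix e e * Q =
      Matrix.fromBlocks
        (A.submatrix (fun i : Fin n => i.succ.castSucc) (fun j : Fin n => j.succ.castSucc)) 0
        (Matrix.of fun (k : Fin 2) (j : Fin n) => A (e (.inr k)) (e (.inl j)))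
        (A.det • 1) := by
    ext i j
    rcases i with i | i <;> rcases j with j | j
    · simp [Matrix.mul_apply, Fintype.sum_sum_type, hQ, Matrix.one_apply, he]
    · have := hAB (.inl i) j
      simpa [Matrix.mul_apply, hQ, Fintype.sum_sum_type] using this
    · simp [Matrix.mul_apply, Fintype.sum_sum_type, hQ, Matrix.one_apply, he]
    · have := hAB (.inr i) j
      simp only [Matrix.mul_apply, hQ, Fintype.sum_sum_type] at this ⊢
      simpa [Matrix.one_apply, Sum.inr.injEq] using this
  have hdet := congrArg Matrix.det hmul
  rw [Matrix.det_mul, Matrix.det_submatrix_equiv_self, Matrix.det_fromBlocks_zero₁₂] at hdet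
  rw [hQ] at hdet
  rw [Matrix.det_fromBlocks_zero₂₁, Matrix.det_one, one_mul] at hdet
  rw [Matrix.det_fin_two] at hdet
  rw [Matrix.det_smul, Matrix.det_one, mul_one] at hdet
  simp only [Matrix.of_apply] at hdet
  simp only [he, cornerEquiv_inr0, cornerEquiv_inr1] at hdet
  rw [hdet]
  simp only [Fintype.card_fin]
  ring

/-- The Desnanot–Jacobi identity multiplied through by `det A`, over any commutative ring. -/
lemma dj_mul {R : Type*} [CommRing R] (n : ℕ)
    (A : Matrix (Fin (n + 2)) (Fin (n + 2)) R) :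
    A.det *
        ((A.submatrix Fin.succ Fin.succ).det *
            (A.submatrix Fin.castSucc Fin.castSucc).det -
          (A.submatrix Fin.succ Fin.castSucc).det *
            (A.submatrix Fin.castSucc Fin.succ).det) =
      A.det * (A.det *
        (A.submatrix (fun i : Fin n => i.succ.castSucc)
          (fun j : Fin n => j.succ.castSucc)).det) := by
  have h := dj_aux n A
  have hev : Even ((n + 1) + (n + 1)) := ⟨n + 1, by ring⟩
  have h00 : A.adjugate 0 0 = (A.submatrix Fin.succ Fin.succ).det := by
    rw [Matrix.adjugate_fin_succ_eq_det_submatrix]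
    simp [Fin.succAbove_zero]
  have hll : A.adjugate (Fin.last (n + 1)) (Fin.last (n + 1)) =
      (A.submatrix Fin.castSucc Fin.castSucc).det := by
    rw [Matrix.adjugate_fin_succ_eq_det_submatrix]
    simp [Fin.succAbove_last, Fin.val_last, hev.neg_one_pow]
  have h0l : A.adjugate 0 (Fin.last (n + 1)) =
      (-1 : R) ^ (n + 1) * (A.submatrix Fin.castSucc Fin.succ).det := by
    rw [Matrix.adjugate_fin_succ_eq_det_submatrix]
    simp [Fin.succAbove_last, Fin.succAbove_zero, Fin.val_last]
  have hl0 : A.adjugate (Fin.last (n + 1)) 0 =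
      (-1 : R) ^ (n + 1) * (A.submatrix Fin.succ Fin.castSucc).det := by
    rw [Matrix.adjugate_fin_succ_eq_det_submatrix]
    simp [Fin.succAbove_last, Fin.succAbove_zero, Fin.val_last]
  rw [h00, hll, h0l, hl0] at h
  have hs : ((-1 : R) ^ (n + 1)) * ((-1 : R) ^ (n + 1)) = 1 := by
    rw [← pow_add]; exact hev.neg_one_pow
  linear_combination h + (A.det * ((A.submatrix Fin.castSucc Fin.succ).det *
    (A.submatrix Fin.succ Fin.castSucc).det)) * hs

/-- Desnanot–Jacobi (Dodgson) identity, corner form: deleting first/last rows and columns. -/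
theorem desnanot_jacobi_corner
    {R : Type*} [CommRing R] (n : ℕ)
    (A : Matrix (Fin (n + 2)) (Fin (n + 2)) R) :
    A.det *
        (A.submatrix (fun i : Fin n => i.succ.castSucc)
          (fun j : Fin n => j.succ.castSucc)).det =
      (A.submatrix Fin.succ Fin.succ).det *
          (A.submatrix Fin.castSucc Fin.castSucc).det -
        (A.submatrix Fin.succ Fin.castSucc).det *
          (A.submatrix Fin.castSucc Fin.succ).det := by
  set X : Matrix (Fin (n + 2)) (Fin (n + 2)) (MvPolynomial (Fin (n + 2) × Fin (n + 2)) ℤ) :=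
    Matrix.of fun i j => MvPolynomial.X (i, j) with hXdef
  have hX0 : X.det ≠ 0 := by
    intro hc
    have h := congrArg (MvPolynomial.eval
      (fun p : Fin (n + 2) × Fin (n + 2) => if p.1 = p.2 then (1 : ℤ) else 0)) hc
    rw [map_zero, RingHom.map_det] at h
    have h1 : (MvPolynomial.eval
        (fun p : Fin (n + 2) × Fin (n + 2) => if p.1 = p.2 then (1 : ℤ) else 0)).mapMatrix X =
        (1 : Matrix (Fin (n + 2)) (Fin (n + 2)) ℤ) := by
      ext i j
      simp [hXdef, Matrix.one_apply]
    rw [h1, Matrix.det_one] at h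
    exact one_ne_zero h
  have hcan := mul_left_cancel₀ hX0 (dj_mul n X)
  set φ : MvPolynomial (Fin (n + 2) × Fin (n + 2)) ℤ →+* R :=
    MvPolynomial.eval₂Hom (Int.castRingHom R) (fun p => A p.1 p.2) with hφ
  have hXA : X.map φ = A := by
    ext i j
    simp [hXdef, hφ]
  have h := congrArg φ hcan
  simp only [map_mul, map_sub, RingHom.map_det, RingHom.mapMatrix_apply,
    ← Matrix.submatrix_map, hXA] at h
  exact h.symm
end

section
/- (Desnanot–Jacobi identity, general rows/columns k < l) For an n×n matrix A and indices 1 ≤ k < l ≤ n: det A · det A^{k,l}_{k,l} = det A^{l}_{l} · det A^{k}_{k} − det A^{l}_{k} · det A^{k}_{l}, where A^{S}_{T} denotes the matrix obtained from A by deleting the rows in S and columns in T. -/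
/-!
Jacobi's trick. Let `B` be the identity matrix with columns `k` and `l` replaced by the
corresponding columns `cramer A eₖ` and `cramer A eₗ` of `adjugate A`. Then `A * B` is `A` with
these columns replaced by `det A • eₖ` and `det A • eₗ`, whose determinant is `(det A)²` times
the central minor, while `det B` is the `2 × 2` minor of `adjugate A` on `{k, l}`, i.e. the
right-hand side. Cancelling one factor `det A` is legitimate for the generic matrix over
`ℤ[xᵢⱼ]`, and the identity then specializes to every commutative ring.
-/

namespace Matrix

variable {R : Type*} [CommRing R]

theorem det_one_updateCol_updateCol {m : Type*} [Fintype m] [DecidableEq m] {k l : m}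
    (hkl : k ≠ l) (u v : m → R) :
    (((1 : Matrix m m R).updateCol k u).updateCol l v).det = u k * v l - u l * v k := by
  let U : Matrix m (Fin 2) R :=
    of fun i => ![u i - (Pi.single k 1 : m → R) i, v i - (Pi.single l 1 : m → R) i]
  let V : Matrix (Fin 2) m R := of ![Pi.single k 1, Pi.single l 1]
  have hUV : ((1 : Matrix m m R).updateCol k u).updateCol l v = 1 + U * V := by
    ext i j
    rcases eq_or_ne j l with rfl | hjl
    · simp [U, V, mul_apply, Fin.sum_univ_two, Pi.single_apply, one_apply, hkl.symm]
    rcases eq_or_ne j k with rfl | hjk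
    · simp [U, V, mul_apply, Fin.sum_univ_two, Pi.single_apply, one_apply, hjl]
    · simp [U, V, mul_apply, Fin.sum_univ_two, one_apply, hjl, hjk]
  have hVU : 1 + V * U = !![u k, v k; u l, v l] := by
    ext a b
    fin_cases a <;> fin_cases b <;> simp [U, V, Pi.single_apply, hkl, hkl.symm]
  rw [hUV, det_one_add_mul_comm, hVU, det_fin_two_of]
  ring

theorem submatrix_updateCol_of_injective {α m n o p : Type*} [DecidableEq n] [DecidableEq p]
    (M : Matrix m n α) (f : o → m) {g : p → n} (hg : Function.Injective g) (j : p)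
    (c : m → α) :
    (M.updateCol (g j) c).submatrix f g = (M.submatrix f g).updateCol j (c ∘ f) := by
  ext i j'
  rcases eq_or_ne j' j with rfl | hj
  · simp
  · simp [hj, hg.ne hj]

variable {n : ℕ}

theorem det_updateCol_single_one (M : Matrix (Fin (n + 1)) (Fin (n + 1)) R) (i j : Fin (n + 1)) :
    (M.updateCol j (Pi.single i 1)).det =
      (-1) ^ (j + i : ℕ) * (M.submatrix i.succAbove j.succAbove).det := by
  rw [← det_transpose, ← updateRow_transpose, ← adjugate_apply,
    adjugate_fin_succ_eq_det_submatrix, ← det_transpose, transpose_submatrix, transpose_transpose]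

theorem det_updateCol_single_self (M : Matrix (Fin (n + 1)) (Fin (n + 1)) R) (i : Fin (n + 1)) :
    (M.updateCol i (Pi.single i 1)).det = (M.submatrix i.succAbove i.succAbove).det := by
  rw [det_updateCol_single_one, Even.neg_one_pow ⟨i, rfl⟩, one_mul]

theorem det_updateCol_single_self_updateCol_single_self
    (A : Matrix (Fin (n + 2)) (Fin (n + 2)) R) (l : Fin (n + 2)) (k : Fin (n + 1)) :
    ((A.updateCol (l.succAbove k) (Pi.single (l.succAbove k) 1)).updateCol l
        (Pi.single l 1)).det =
      (A.submatrix (l.succAbove ∘ k.succAbove) (l.succAbove ∘ k.succAbove)).det := by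
  have hsingle : (Pi.single (l.succAbove k) 1 : Fin (n + 2) → R) ∘ l.succAbove =
      Pi.single k 1 := by
    ext i
    simp [Pi.single_apply]
  rw [det_updateCol_single_self, submatrix_updateCol_of_injective _ _
    Fin.succAbove_right_injective, hsingle, det_updateCol_single_self, submatrix_submatrix]

theorem det_mul_desnanot_jacobi_succAbove (A : Matrix (Fin (n + 2)) (Fin (n + 2)) R)
    (l : Fin (n + 2)) (k : Fin (n + 1)) :
    A.det * (A.det *
        (A.submatrix (l.succAbove ∘ k.succAbove) (l.succAbove ∘ k.succAbove)).det) =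
      A.det * ((A.submatrix l.succAbove l.succAbove).det *
          (A.submatrix (l.succAbove k).succAbove (l.succAbove k).succAbove).det -
        (A.submatrix l.succAbove (l.succAbove k).succAbove).det *
          (A.submatrix (l.succAbove k).succAbove l.succAbove).det) := by
  set k₀ := l.succAbove k
  have hkl : k₀ ≠ l := Fin.succAbove_ne l k
  have hAB : A * ((1 : Matrix _ _ R).updateCol k₀ (cramer A (Pi.single k₀ 1))).updateCol l
      (cramer A (Pi.single l 1)) =
      (A.updateCol k₀ (A.det • Pi.single k₀ 1)).updateCol l (A.det • Pi.single l 1) := by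
    rw [mul_updateCol, mul_updateCol, mul_one, mulVec_cramer, mulVec_cramer]
  have hdet := congrArg det hAB
  rw [det_mul, det_one_updateCol_updateCol hkl, det_updateCol_smul, updateCol_comm _ hkl,
    det_updateCol_smul, ← updateCol_comm _ hkl, det_updateCol_single_self_updateCol_single_self]
    at hdet
  simp only [cramer_apply, det_updateCol_single_self, det_updateCol_single_one] at hdet
  have hsign : (-1 : R) ^ (l + k₀ : ℕ) * (-1) ^ (k₀ + l : ℕ) = 1 := by
    rw [← pow_add]
    exact Even.neg_one_pow ⟨l + k₀, by ring⟩
  linear_combination -hdet - A.det * (A.submatrix l.succAbove k₀.succAbove).det *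
    (A.submatrix k₀.succAbove l.succAbove).det * hsign

theorem desnanot_jacobi_succAbove (A : Matrix (Fin (n + 2)) (Fin (n + 2)) R)
    (l : Fin (n + 2)) (k : Fin (n + 1)) :
    A.det * (A.submatrix (l.succAbove ∘ k.succAbove) (l.succAbove ∘ k.succAbove)).det =
      (A.submatrix l.succAbove l.succAbove).det *
          (A.submatrix (l.succAbove k).succAbove (l.succAbove k).succAbove).det -
        (A.submatrix l.succAbove (l.succAbove k).succAbove).det *
          (A.submatrix (l.succAbove k).succAbove l.succAbove).det := by
  have generic := mul_left_cancel₀ (det_mvPolynomialX_ne_zero _ ℤ)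
    (det_mul_desnanot_jacobi_succAbove (mvPolynomialX (Fin (n + 2)) (Fin (n + 2)) ℤ) l k)
  simpa only [map_mul, map_sub, RingHom.map_det, RingHom.mapMatrix_apply, ← submatrix_map,
    MvPolynomial.coe_eval₂Hom, mvPolynomialX_map_eval₂] using
    congrArg (MvPolynomial.eval₂Hom (Int.castRingHom R) fun p => A p.1 p.2) generic

end Matrix

/-- Desnanot–Jacobi identity for general row/column indices `k < l`. -/
theorem desnanot_jacobi
    {R : Type*} [CommRing R] (n : ℕ)
    (A : Matrix (Fin (n + 2)) (Fin (n + 2)) R)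
    (k l : Fin (n + 2)) (hkl : k < l) :
    A.det *
        (A.submatrix
          (fun i : Fin n =>
            l.succAbove ((⟨k.val, Nat.lt_of_lt_of_le hkl (Nat.lt_succ_iff.mp l.isLt)⟩ :
              Fin (n + 1)).succAbove i))
          (fun j : Fin n =>
            l.succAbove ((⟨k.val, Nat.lt_of_lt_of_le hkl (Nat.lt_succ_iff.mp l.isLt)⟩ :
              Fin (n + 1)).succAbove j))).det =
      (A.submatrix l.succAbove l.succAbove).det *
          (A.submatrix k.succAbove k.succAbove).det -
        (A.submatrix l.succAbove k.succAbove).det *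
          (A.submatrix k.succAbove l.succAbove).det := by
  have hk : l.succAbove ⟨k, by omega⟩ = k := Fin.succAbove_of_castSucc_lt _ _ hkl
  have key := Matrix.desnanot_jacobi_succAbove A l ⟨k, by omega⟩
  rwa [hk] at key
end

section
/- (Generalized condensation at pivot (k,l)) Let A be an n×n matrix, n > 2, and fix 1 ≤ k, l ≤ n. Define the (n-1)×(n-1) matrix C by: c_{i,j} = det [[a_{i,j}, a_{i,l}],[a_{k,j}, a_{k,l}]] if j < l and i < k; c_{i,j} = det [[a_{i,l}, a_{i,j+1}],[a_{k,l}, a_{k,j+1}]] if j ≥ l and i < k; c_{i,j} = det [[a_{k,j}, a_{k,l}],[a_{i+1,j}, a_{i+1,l}]] if j < l and i ≥ k; c_{i,j} = det [[a_{k,l}, a_{k,j+1}],[a_{i+1,l}, a_{i+1,j+1}]] if j ≥ l and i ≥ k. Then (a_{k,l})^{n-2} · det A = det C. -/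
/-- The Chiò-condensed matrix at pivot `(k, l)`. -/
def chioMat {R : Type*} [CommRing R] (n : ℕ)
    (A : Matrix (Fin (n + 3)) (Fin (n + 3)) R) (k l : Fin (n + 3)) :
    Matrix (Fin (n + 2)) (Fin (n + 2)) R := fun i j =>
  if i.val < k.val then
    if j.val < l.val then
      A i.castSucc j.castSucc * A k l - A i.castSucc l * A k j.castSucc
    else
      A i.castSucc l * A k j.succ - A i.castSucc j.succ * A k l
  else
    if j.val < l.val then
      A k j.castSucc * A i.succ l - A k l * A i.succ j.castSucc
    else
      A k l * A i.succ j.succ - A k j.succ * A i.succ l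

theorem chio_key {R : Type*} [CommRing R] (n : ℕ)
    (A : Matrix (Fin (n + 3)) (Fin (n + 3)) R) (k l : Fin (n + 3)) :
    A k l * (chioMat n A k l).det = A k l ^ (n + 2) * A.det := by
  set B : Matrix (Fin (n + 3)) (Fin (n + 3)) R :=
    Matrix.of fun i j => if i = k then A k j else A k l * A i j - A i l * A k j with hB
  -- determinant of the row-reduced matrix
  have hBdet : B.det = A k l ^ (n + 2) * A.det := by
    have h1 : B.det = (Matrix.of fun i j => (if i = k then 1 else A k l) * A i j).det := by
      apply Matrix.det_eq_of_forall_row_eq_smul_add_const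
        (fun i => if i = k then 0 else -(A i l)) k (if_pos rfl)
      intro i j
      by_cases h : i = k <;> simp [hB, h] <;> ring
    rw [h1, Matrix.det_mul_column]
    congr 1
    rw [← Finset.mul_prod_erase _ _ (Finset.mem_univ k), if_pos rfl, one_mul,
      Finset.prod_congr rfl (fun i hi => if_neg (Finset.mem_erase.mp hi).1),
      Finset.prod_const, Finset.card_erase_of_mem (Finset.mem_univ k), Finset.card_univ,
      Fintype.card_fin]
    norm_num
  -- expansion along column l
  have hexp : B.det = (-1 : R) ^ ((k : ℕ) + (l : ℕ)) * A k l *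
      (B.submatrix k.succAbove l.succAbove).det := by
    rw [Matrix.det_succ_column B l, Finset.sum_eq_single k]
    · simp [hB, mul_assoc]
    · intro i _ hik
      have h0 : B i l = 0 := by simp [hB, hik]; ring
      simp [h0]
    · intro h; exact absurd (Finset.mem_univ k) h
  have hsub : ∀ (i j : Fin (n + 2)), B.submatrix k.succAbove l.succAbove i j
      = A k l * A (k.succAbove i) (l.succAbove j)
        - A (k.succAbove i) l * A k (l.succAbove j) := by
    intro i j
    simp [hB, Matrix.submatrix_apply, Fin.succAbove_ne k i]
  -- succAbove case lemmas
  have hlt : ∀ (p : Fin (n + 3)) (i : Fin (n + 2)), (i : ℕ) < (p : ℕ) →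
      p.succAbove i = i.castSucc := by
    intro p i h
    exact Fin.succAbove_of_castSucc_lt p i (by simpa [Fin.lt_def] using h)
  have hge : ∀ (p : Fin (n + 3)) (i : Fin (n + 2)), ¬ (i : ℕ) < (p : ℕ) →
      p.succAbove i = i.succ := by
    intro p i h
    exact Fin.succAbove_of_le_castSucc p i (by simpa [Fin.le_def] using not_lt.mp h)
  -- the condensed matrix as scaled submatrix
  have hC : chioMat n A k l = Matrix.of fun (i j : Fin (n + 2)) =>
      (if (i : ℕ) < (k : ℕ) then (1 : R) else -1) *
        (Matrix.of fun (i' j' : Fin (n + 2)) => (if (j' : ℕ) < (l : ℕ) then (1 : R) else -1) *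
          B.submatrix k.succAbove l.succAbove i' j') i j := by
    ext i j
    simp only [Matrix.of_apply]
    rw [hsub i j]
    by_cases hik : (i : ℕ) < (k : ℕ) <;> by_cases hjl : (j : ℕ) < (l : ℕ)
    · rw [hlt k i hik, hlt l j hjl]; simp only [chioMat, hik, hjl, if_true]; ring
    · rw [hlt k i hik, hge l j hjl]; simp only [chioMat, hik, hjl, if_true, if_false]; ring
    · rw [hge k i hik, hlt l j hjl]; simp only [chioMat, hik, hjl, if_true, if_false]; ring
    · rw [hge k i hik, hge l j hjl]; simp only [chioMat, hik, hjl, if_false]; ring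
  have hCdet : (chioMat n A k l).det =
      (∏ i : Fin (n + 2), (if (i : ℕ) < (k : ℕ) then (1 : R) else -1)) *
        ((∏ j : Fin (n + 2), (if (j : ℕ) < (l : ℕ) then (1 : R) else -1)) *
          (B.submatrix k.succAbove l.succAbove).det) := by
    rw [hC, Matrix.det_mul_column, Matrix.det_mul_row]
  -- sign products
  have hsgn : ∀ p : Fin (n + 3),
      (∏ i : Fin (n + 2), (if (i : ℕ) < (p : ℕ) then (1 : R) else -1))
        = (-1) ^ (n + 2 - (p : ℕ)) := by
    intro p
    have hp : (p : ℕ) ≤ n + 2 := Nat.lt_succ_iff.mp p.isLt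
    rw [Fin.prod_univ_eq_prod_range (fun i => if i < (p : ℕ) then (1 : R) else -1),
      ← Finset.prod_range_mul_prod_Ico _ hp,
      Finset.prod_congr rfl (fun i hi => if_pos (Finset.mem_range.mp hi)),
      Finset.prod_const_one, one_mul,
      Finset.prod_congr rfl (fun i hi => if_neg (not_lt.mpr (Finset.mem_Ico.mp hi).1)),
      Finset.prod_const, Nat.card_Ico]
  have hsigns : ((-1 : R)) ^ ((n + 2 - (k : ℕ)) + (n + 2 - (l : ℕ)))
      = (-1) ^ ((k : ℕ) + (l : ℕ)) := by
    rw [neg_one_pow_eq_pow_mod_two, neg_one_pow_eq_pow_mod_two (n := (k : ℕ) + (l : ℕ))]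
    congr 1
    have hk := k.isLt
    have hl := l.isLt
    omega
  rw [hCdet, hsgn k, hsgn l, ← hBdet, hexp, ← mul_assoc ((-1 : R) ^ (n + 2 - (k : ℕ))),
    ← pow_add, hsigns]
  ring

/-- Generalized Chiò condensation at an arbitrary pivot `(k, l)`. -/
theorem chio_condensation_pivot
    {R : Type*} [CommRing R] (n : ℕ)
    (A : Matrix (Fin (n + 3)) (Fin (n + 3)) R) (k l : Fin (n + 3)) :
    (A k l) ^ (n + 1) * A.det =
      Matrix.det fun i j : Fin (n + 2) =>
        if i.val < k.val then
          if j.val < l.val then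
            A i.castSucc j.castSucc * A k l - A i.castSucc l * A k j.castSucc
          else
            A i.castSucc l * A k j.succ - A i.castSucc j.succ * A k l
        else
          if j.val < l.val then
            A k j.castSucc * A i.succ l - A k l * A i.succ j.castSucc
          else
            A k l * A i.succ j.succ - A k j.succ * A i.succ l := by
  classical
  have hcancel :
      (Matrix.of fun i j : Fin (n + 3) =>
          (MvPolynomial.X (i, j) : MvPolynomial (Fin (n + 3) × Fin (n + 3)) ℤ)) k l ^ (n + 1) *
        (Matrix.of fun i j : Fin (n + 3) =>
          (MvPolynomial.X (i, j) : MvPolynomial (Fin (n + 3) × Fin (n + 3)) ℤ)).det =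
      (chioMat n (Matrix.of fun i j : Fin (n + 3) =>
          (MvPolynomial.X (i, j) : MvPolynomial (Fin (n + 3) × Fin (n + 3)) ℤ)) k l).det := by
    set P : Matrix (Fin (n + 3)) (Fin (n + 3)) (MvPolynomial (Fin (n + 3) × Fin (n + 3)) ℤ) :=
      Matrix.of fun i j => MvPolynomial.X (i, j) with hP
    apply mul_left_cancel₀ (a := P k l) (MvPolynomial.X_ne_zero (k, l))
    calc P k l * (P k l ^ (n + 1) * P.det) = P k l ^ (n + 2) * P.det := by ring
      _ = P k l * (chioMat n P k l).det := (chio_key n P k l).symm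
  set P : Matrix (Fin (n + 3)) (Fin (n + 3)) (MvPolynomial (Fin (n + 3) × Fin (n + 3)) ℤ) :=
    Matrix.of fun i j => MvPolynomial.X (i, j) with hP
  set f : MvPolynomial (Fin (n + 3) × Fin (n + 3)) ℤ →+* R :=
    MvPolynomial.eval₂Hom (Int.castRingHom R) (fun p => A p.1 p.2) with hf
  have hmapA : P.map f = A := by
    ext i j
    simp [hP, hf, MvPolynomial.eval₂Hom_X']
  have hmapC : (chioMat n P k l).map f = chioMat n A k l := by
    ext i j
    simp only [Matrix.map_apply, chioMat, apply_ite f, map_sub, map_mul]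
    simp [hP, hf, MvPolynomial.eval₂Hom_X']
  have h := congrArg f hcancel
  rw [map_mul, map_pow, RingHom.map_det, RingHom.map_det, RingHom.mapMatrix_apply,
    RingHom.mapMatrix_apply, hmapA, hmapC] at h
  have hX : f (P k l) = A k l := by simp [hP, hf, MvPolynomial.eval₂Hom_X']
  rw [hX] at h
  exact h
end

section
/- (Condensation at pivot in first row) Let A be an n×n matrix, n > 2, and let l be an index with 1 ≤ l ≤ n. Define the (n-1)×(n-1) matrix B with entries b_{i,j} = det [[a_{1,l}, a_{1,j+1}],[a_{i+1,l}, a_{i+1,j+1}]] if l ≤ j, and b_{i,j} = det [[a_{1,j}, a_{1,l}],[a_{i+1,j}, a_{i+1,l}]] if j < l. Then (a_{1,l})^{n-2} · det A = det B. -/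
/-!
Replace every row `i ≠ 0` of `A` by `A 0 l • row i - A i l • row 0`. This multiplies the
determinant by `A 0 l ^ (m + 1)` and clears column `l` below the pivot, so expanding along that
column gives `A 0 l` times a minor which, up to the column signs that put the pivot column first
or last in each `2 × 2` determinant, is the condensed matrix. This proves Chiò's identity
multiplied by `A 0 l`; the factor cancels for the generic matrix over `MvPolynomial _ ℤ`, a
domain, and the identity specialises to any commutative ring.
-/

open Finset

namespace Matrix

variable {R : Type*} [CommRing R] {m : ℕ}

def firstRowCondensation (A : Matrix (Fin (m + 2)) (Fin (m + 2)) R) (l : Fin (m + 2)) :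
    Matrix (Fin (m + 1)) (Fin (m + 1)) R :=
  of fun i j =>
    if l.val ≤ j.val then A 0 l * A i.succ j.succ - A 0 j.succ * A i.succ l
    else A 0 j.castSucc * A i.succ l - A 0 l * A i.succ j.castSucc

theorem _root_.RingHom.map_firstRowCondensation {S : Type*} [CommRing S] (f : R →+* S)
    (A : Matrix (Fin (m + 2)) (Fin (m + 2)) R) (l : Fin (m + 2)) :
    (firstRowCondensation A l).map f = firstRowCondensation (A.map f) l := by
  ext i j
  simp only [firstRowCondensation, map_apply, of_apply, apply_ite f, map_sub, map_mul]

def clearPivotColumn (A : Matrix (Fin (m + 2)) (Fin (m + 2)) R) (l : Fin (m + 2)) :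
    Matrix (Fin (m + 2)) (Fin (m + 2)) R :=
  of fun i j => if i = 0 then A i j else A 0 l * A i j - A i l * A 0 j

theorem det_clearPivotColumn (A : Matrix (Fin (m + 2)) (Fin (m + 2)) R) (l : Fin (m + 2)) :
    (clearPivotColumn A l).det = A 0 l ^ (m + 1) * A.det := by
  let v : Fin (m + 2) → R := fun i => if i = 0 then 1 else A 0 l
  have hv : ∏ i, v i = A 0 l ^ (m + 1) := by simp [v, Fin.prod_univ_succ, Fin.succ_ne_zero]
  rw [← hv, ← det_mul_column]
  refine det_eq_of_forall_row_eq_smul_add_const (fun i => if i = 0 then 0 else -A i l) 0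
    (if_pos rfl) fun i j => ?_
  simp only [clearPivotColumn, v, of_apply]
  split_ifs <;> ring

theorem clearPivotColumn_apply_pivot (A : Matrix (Fin (m + 2)) (Fin (m + 2)) R)
    (l : Fin (m + 2)) {i : Fin (m + 2)} (hi : i ≠ 0) : clearPivotColumn A l i l = 0 := by
  simp only [clearPivotColumn, of_apply, if_neg hi]
  ring

theorem det_clearPivotColumn_eq_mul_det_submatrix (A : Matrix (Fin (m + 2)) (Fin (m + 2)) R)
    (l : Fin (m + 2)) :
    (clearPivotColumn A l).det =
      (-1) ^ (l : ℕ) * A 0 l * ((clearPivotColumn A l).submatrix Fin.succ l.succAbove).det := by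
  rw [det_succ_column _ l, Fin.sum_univ_succ, Finset.sum_eq_zero fun i _ =>
    by rw [clearPivotColumn_apply_pivot A l i.succ_ne_zero, mul_zero, zero_mul]]
  simp [clearPivotColumn]

theorem firstRowCondensation_eq_submatrix_mul_diagonal
    (A : Matrix (Fin (m + 2)) (Fin (m + 2)) R) (l : Fin (m + 2)) :
    firstRowCondensation A l = (clearPivotColumn A l).submatrix Fin.succ l.succAbove *
      diagonal fun j => if l.val ≤ j.val then 1 else -1 := by
  ext i j
  rw [mul_diagonal, submatrix_apply]
  by_cases h : l.val ≤ j.val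
  · rw [Fin.succAbove_of_le_castSucc _ _ (by simpa [Fin.le_def] using h)]
    simp only [firstRowCondensation, clearPivotColumn, of_apply, if_pos h, Fin.succ_ne_zero,
      if_false]
    ring
  · rw [Fin.succAbove_of_castSucc_lt _ _ (by simpa [Fin.lt_def] using h)]
    simp only [firstRowCondensation, clearPivotColumn, of_apply, if_neg h, Fin.succ_ne_zero,
      if_false]
    ring

theorem prod_ite_val_le_one_neg_one (l : Fin (m + 2)) :
    ∏ j : Fin (m + 1), (if l.val ≤ j.val then 1 else -1 : R) = (-1) ^ (l : ℕ) := by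
  rw [prod_ite, prod_const_one, one_mul, prod_const]
  simp only [not_le, Fin.card_filter_val_lt]
  rw [min_eq_right (by omega)]

theorem pivot_mul_det_firstRowCondensation (A : Matrix (Fin (m + 2)) (Fin (m + 2)) R)
    (l : Fin (m + 2)) :
    A 0 l * (firstRowCondensation A l).det = A 0 l * (A 0 l ^ m * A.det) := by
  have h := det_clearPivotColumn_eq_mul_det_submatrix A l
  rw [det_clearPivotColumn] at h
  rw [firstRowCondensation_eq_submatrix_mul_diagonal, det_mul, det_diagonal,
    prod_ite_val_le_one_neg_one]
  linear_combination -h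

theorem pow_mul_det_eq_det_firstRowCondensation (A : Matrix (Fin (m + 2)) (Fin (m + 2)) R)
    (l : Fin (m + 2)) :
    A 0 l ^ m * A.det = (firstRowCondensation A l).det := by
  let X := mvPolynomialX (Fin (m + 2)) (Fin (m + 2)) ℤ
  have hX : X 0 l ^ m * X.det = (firstRowCondensation X l).det :=
    (mul_left_cancel₀ (MvPolynomial.X_ne_zero (0, l))
      (pivot_mul_det_firstRowCondensation X l)).symm
  let f := MvPolynomial.eval₂Hom (Int.castRingHom R)
    fun p : Fin (m + 2) × Fin (m + 2) => A p.1 p.2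
  have hXA : X.map f = A := mvPolynomialX_map_eval₂ _ A
  simpa only [map_mul, map_pow, RingHom.map_det, RingHom.mapMatrix_apply,
    RingHom.map_firstRowCondensation, hXA, ← map_apply] using congrArg f hX

end Matrix

/-- Chiò condensation at a pivot in the first row (the `k = 1` case). -/
theorem chio_condensation_first_row_pivot
    {R : Type*} [CommRing R] (n : ℕ)
    (A : Matrix (Fin (n + 3)) (Fin (n + 3)) R) (l : Fin (n + 3)) :
    (A 0 l) ^ (n + 1) * A.det =
      Matrix.det fun i j : Fin (n + 2) =>
        if l.val ≤ j.val then
          A 0 l * A i.succ j.succ - A 0 j.succ * A i.succ l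
        else
          A 0 j.castSucc * A i.succ l - A 0 l * A i.succ j.castSucc :=
  A.pow_mul_det_eq_det_firstRowCondensation l
end

section
/- (Polynomial identity extension) The identity (a_{1,1})^{n-2}·det A = det B (B the Chiò condensation of A) holds over any commutative ring for all n > 2, as both sides are polynomials with integer coefficients in the entries of A that agree whenever a_{1,1} is invertible in a field; in particular it holds without any invertibility assumption on a_{1,1}. -/
/-- The Chiò condensation identity as a polynomial identity in `ℤ[a₁₁, …, aₙₙ]`
(hence valid over every commutative ring, with no invertibility assumption). -/
theorem chio_condensation_polynomial (n : ℕ) :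
    ((MvPolynomial.X (0, 0) : MvPolynomial (Fin (n + 3) × Fin (n + 3)) ℤ)) ^ (n + 1) *
        (Matrix.det fun i j : Fin (n + 3) =>
          (MvPolynomial.X (i, j) : MvPolynomial (Fin (n + 3) × Fin (n + 3)) ℤ)) =
      Matrix.det fun i j : Fin (n + 2) =>
        (MvPolynomial.X (0, 0) : MvPolynomial (Fin (n + 3) × Fin (n + 3)) ℤ) *
            MvPolynomial.X (i.succ, j.succ) -
          MvPolynomial.X ((0 : Fin (n + 3)), j.succ) *
            MvPolynomial.X (i.succ, (0 : Fin (n + 3))) := by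
  set R := MvPolynomial (Fin (n + 3) × Fin (n + 3)) ℤ with hR
  set a : R := MvPolynomial.X (0, 0) with ha
  set A : Matrix (Fin (n + 3)) (Fin (n + 3)) R := Matrix.of fun i j => MvPolynomial.X (i, j)
    with hA
  set v : Fin (n + 3) → R := fun i => if i = 0 then 1 else a with hv
  set c : Fin (n + 3) → R := fun i => if i = 0 then 0 else -(MvPolynomial.X (i, (0 : Fin (n+3))))
    with hc
  set M1 : Matrix (Fin (n + 3)) (Fin (n + 3)) R := Matrix.of fun i j => v i * A i j with hM1
  set C : Matrix (Fin (n + 3)) (Fin (n + 3)) R := Matrix.of fun i j => M1 i j + c i * M1 0 j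
    with hC
  have hdetC : C.det = M1.det :=
    Matrix.det_eq_of_forall_row_eq_smul_add_const c 0 (by rw [hc]; exact if_pos rfl) (fun i j => rfl)
  have hdetM1 : M1.det = a ^ (n + 2) * A.det := by
    rw [hM1, Matrix.det_mul_column]
    congr 1
    rw [Fin.prod_univ_succ]
    simp [hv, Fin.succ_ne_zero]
  have hC00 : C 0 0 = a := by simp [hC, hM1, hv, hc, hA, ha]
  have hCi0 : ∀ i : Fin (n + 3), i ≠ 0 → C i 0 = 0 := by
    intro i hi
    simp only [hC, hM1, hc, hv, hA, Matrix.of_apply, if_neg hi, if_pos rfl, if_true]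
    ring
  have hCsucc : ∀ (i j : Fin (n + 2)), C i.succ j.succ =
      a * MvPolynomial.X (i.succ, j.succ) -
        MvPolynomial.X ((0 : Fin (n + 3)), j.succ) * MvPolynomial.X (i.succ, (0 : Fin (n+3))) := by
    intro i j
    simp only [hC, hM1, hc, hv, hA, Matrix.of_apply, if_neg (Fin.succ_ne_zero i), if_pos rfl, if_true]
    ring
  have hexp : C.det = a * Matrix.det (fun i j : Fin (n + 2) =>
      a * MvPolynomial.X (i.succ, j.succ) -
        MvPolynomial.X ((0 : Fin (n + 3)), j.succ) * MvPolynomial.X (i.succ, (0 : Fin (n+3)))) := by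
    rw [Matrix.det_succ_column_zero]
    rw [Finset.sum_eq_single 0]
    · rw [hC00]
      simp only [Fin.val_zero, pow_zero, one_mul]
      have h2 : C.submatrix (Fin.succAbove 0) Fin.succ = fun i j : Fin (n + 2) =>
          a * MvPolynomial.X (i.succ, j.succ) -
            MvPolynomial.X ((0 : Fin (n + 3)), j.succ) *
              MvPolynomial.X (i.succ, (0 : Fin (n+3))) := by
        funext i j
        rw [Matrix.submatrix_apply, Fin.succAbove_zero, hCsucc]
      rw [h2]
    · intro b _ hb
      rw [hCi0 b hb]; ring
    · intro h; exact absurd (Finset.mem_univ 0) h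
  have key : a * (a ^ (n + 1) * A.det) = a * Matrix.det (fun i j : Fin (n + 2) =>
      a * MvPolynomial.X (i.succ, j.succ) -
        MvPolynomial.X ((0 : Fin (n + 3)), j.succ) * MvPolynomial.X (i.succ, (0 : Fin (n+3)))) := by
    rw [← hexp, hdetC, hdetM1]; ring
  exact mul_left_cancel₀ (MvPolynomial.X_ne_zero _) key
end

section
/- (Correctness of the condensation algorithm step) Let A be an n×n matrix over a field, n ≥ 3, whose first row is not identically zero, and let l be the smallest index with a_{1,l} ≠ 0. Define B as the (n-1)×(n-1) matrix with b_{i,j} = det [[a_{1,l}, a_{1,j+1}],[a_{i+1,l}, a_{i+1,j+1}]] for l ≤ j and b_{i,j} = det [[a_{1,j}, a_{1,l}],[a_{i+1,j}, a_{i+1,l}]] for j < l. Then det A = det B / (a_{1,l})^{n-2}. -/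
/-- Product of column signs: `(-1)` for each column index below `c`. -/
lemma condensation_aux_prod_sign {K : Type*} [Field K] :
    ∀ (m c : ℕ), c ≤ m →
      (∏ j : Fin m, (if c ≤ (j : ℕ) then (1 : K) else -1)) = (-1) ^ c := by
  intro m
  induction m with
  | zero =>
    intro c hc
    interval_cases c
    simp
  | succ m ih =>
    intro c hc
    rcases Nat.lt_or_ge c (m + 1) with h | h
    · have hcm : c ≤ m := Nat.lt_succ_iff.mp h
      rw [Fin.prod_univ_castSucc]
      simp only [Fin.coe_castSucc, Fin.val_last]
      rw [if_pos hcm, mul_one, ih c hcm]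
    · have hcm : c = m + 1 := le_antisymm hc h
      subst hcm
      rw [Finset.prod_congr rfl (fun j _ => if_neg (not_le.mpr j.isLt))]
      rw [Finset.prod_const, Finset.card_univ, Fintype.card_fin]

/-- Correctness of one step of the condensation algorithm: pivoting on the first
nonzero entry `a_{1,l}` of the first row. -/
theorem condensation_algorithm_step
    {K : Type*} [Field K] (n : ℕ)
    (A : Matrix (Fin (n + 3)) (Fin (n + 3)) K) (l : Fin (n + 3))
    (hl : A 0 l ≠ 0) (hmin : ∀ j, j < l → A 0 j = 0) :
    A.det =
      (Matrix.det fun i j : Fin (n + 2) =>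
        if l.val ≤ j.val then
          A 0 l * A i.succ j.succ - A 0 j.succ * A i.succ l
        else
          A 0 j.castSucc * A i.succ l - A 0 l * A i.succ j.castSucc) /
        (A 0 l) ^ (n + 1) := by
  classical
  -- the row-operation matrix `D`
  set D : Matrix (Fin (n + 3)) (Fin (n + 3)) K :=
    fun i j => if j = i then (if i = 0 then 1 else A 0 l)
      else if j = 0 then -(A i l) else 0 with hD
  have hDtri : D.BlockTriangular OrderDual.toDual := by
    intro i j hij
    have hij' : i < j := by simpa using hij
    have hj0 : j ≠ 0 := (lt_of_le_of_lt (Fin.zero_le i) hij').ne'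
    simp [hD, hij'.ne', hj0]
  have hdetD : D.det = (A 0 l) ^ (n + 2) := by
    rw [Matrix.det_of_lowerTriangular D hDtri, Fin.prod_univ_succ]
    simp [hD, Fin.succ_ne_zero]
  -- the entries of `D * A`
  have hDA : ∀ i j, (D * A) i j =
      if i = 0 then A 0 j else A 0 l * A i j - A i l * A 0 j := by
    intro i j
    rw [Matrix.mul_apply]
    by_cases hi : i = 0
    · subst hi
      have h : ∀ k, D 0 k * A k j = if k = 0 then A k j else 0 := by
        intro k
        by_cases hk : k = 0 <;> simp [hD, hk]
      simp only [h, Finset.sum_ite_eq', Finset.mem_univ, if_true]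
    · have h : ∀ k, D i k * A k j =
          (if k = i then A 0 l * A i j else 0) +
          (if k = 0 then -(A i l) * A 0 j else 0) := by
        intro k
        rcases eq_or_ne k i with rfl | h1
        · simp [hD, hi]
        · rcases eq_or_ne k 0 with rfl | h2 <;> simp [hD, h1, *]
      rw [Finset.sum_congr rfl (fun k _ => h k), Finset.sum_add_distrib]
      simp only [Finset.sum_ite_eq', Finset.mem_univ, if_true, if_neg hi]
      ring
  -- the column `l` of `D * A` has a single nonzero entry, at row `0`
  have hcol : ∀ i : Fin (n + 2), (D * A) i.succ l = 0 := by
    intro i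
    rw [hDA, if_neg (Fin.succ_ne_zero i)]
    ring
  have h0l : (D * A) 0 l = A 0 l := by rw [hDA]; simp
  -- Laplace expansion of `det (D * A)` along column `l`
  have e2 : (D * A).det =
      (-1 : K) ^ (l : ℕ) * A 0 l * ((D * A).submatrix Fin.succ l.succAbove).det := by
    rw [Matrix.det_succ_column (D * A) l, Fin.sum_univ_succ]
    simp only [hcol, mul_zero, zero_mul, Finset.sum_const_zero, add_zero, h0l,
      Fin.val_zero, zero_add, Fin.succAbove_zero]
  -- the condensed matrix equals the minor with sign-flipped columns
  have hBM : (fun i j : Fin (n + 2) =>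
        if l.val ≤ j.val then
          A 0 l * A i.succ j.succ - A 0 j.succ * A i.succ l
        else
          A 0 j.castSucc * A i.succ l - A 0 l * A i.succ j.castSucc) =
      Matrix.of (fun i j : Fin (n + 2) =>
        (if (l : ℕ) ≤ (j : ℕ) then (1 : K) else -1) *
          ((D * A).submatrix Fin.succ l.succAbove) i j) := by
    funext i j
    by_cases hj : (l : ℕ) ≤ (j : ℕ)
    · have hsa : l.succAbove j = j.succ :=
        Fin.succAbove_of_le_castSucc _ _ (by simpa [Fin.le_def] using hj)
      simp only [hj, if_true, Matrix.of_apply, Matrix.submatrix_apply, hsa, one_mul,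
        hDA, if_neg (Fin.succ_ne_zero i)]
      ring
    · have hjl : j.castSucc < l := by
        simpa [Fin.lt_def] using Nat.lt_of_not_le hj
      have hsa : l.succAbove j = j.castSucc :=
        Fin.succAbove_of_castSucc_lt _ _ hjl
      simp only [hj, if_false, Matrix.of_apply, Matrix.submatrix_apply, hsa,
        hDA, if_neg (Fin.succ_ne_zero i), hmin _ hjl]
      ring
  have e3 : (Matrix.det fun i j : Fin (n + 2) =>
        if l.val ≤ j.val then
          A 0 l * A i.succ j.succ - A 0 j.succ * A i.succ l
        else
          A 0 j.castSucc * A i.succ l - A 0 l * A i.succ j.castSucc) =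
      (-1 : K) ^ (l : ℕ) * ((D * A).submatrix Fin.succ l.succAbove).det := by
    rw [hBM, Matrix.det_mul_row,
      condensation_aux_prod_sign (n + 2) (l : ℕ) (Nat.lt_succ_iff.mp l.isLt)]
  have e1 : (D * A).det = (A 0 l) ^ (n + 2) * A.det := by
    rw [Matrix.det_mul, hdetD]
  have key : (A 0 l) ^ (n + 2) * A.det =
      A 0 l * (Matrix.det fun i j : Fin (n + 2) =>
        if l.val ≤ j.val then
          A 0 l * A i.succ j.succ - A 0 j.succ * A i.succ l
        else
          A 0 j.castSucc * A i.succ l - A 0 l * A i.succ j.castSucc) := by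
    rw [← e1, e2, e3]
    ring
  rw [eq_div_iff (pow_ne_zero _ hl)]
  apply mul_left_cancel₀ hl
  linear_combination key
end
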